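/- Let (L, (l_A)) and (M, (m_A)) be two limit cones over the same diagram D : J ⥤ C in a dagger category C, and let f : L ⟶ M be the unique isomorphism of limit cones (m_A ∘ f = l_A for all A). Then the following are equivalent: (i) f is unitary; (ii) f ∘ l_A† = m_A† for every object A of J (f is also a morphism of the colimit cocones obtained by daggering the cone legs); (iii) m_B ∘ m_A† = l_B ∘ l_A† for all objects A, B of J. -/
import Mathlib

open CategoryTheory

universe v u v₁ u₁ v₂ u₂

class DaggerCategory (C : Type u) [Category.{v} C] where
  dag : ∀ {A B : C}, (A ⟶ B) → (B ⟶ A)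
  dag_id : ∀ (A : C), dag (𝟙 A) = 𝟙 A
  dag_comp : ∀ {A B X : C} (f : A ⟶ B) (g : B ⟶ X), dag (f ≫ g) = dag g ≫ dag f
  dag_dag : ∀ {A B : C} (f : A ⟶ B), dag (dag f) = f

postfix:max "†" => DaggerCategory.dag

section Defs

variable {C : Type u} [Category.{v} C] [DaggerCategory C]

/-- A morphism `f` is a partial isometry if `f ∘ f† ∘ f = f`. -/
def IsPartialIsometry {A B : C} (f : A ⟶ B) : Prop :=
  f ≫ f† ≫ f = f

/-- A morphism `f : A ⟶ B` is unitary if `f† ∘ f = 𝟙 A` and `f ∘ f† = 𝟙 B`. -/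
def IsUnitary {A B : C} (f : A ⟶ B) : Prop :=
  f ≫ f† = 𝟙 A ∧ f† ≫ f = 𝟙 B

/-- A morphism `f` is dagger monic (an isometry) if `f† ∘ f = 𝟙`. -/
def DaggerMonic {A B : C} (f : A ⟶ B) : Prop :=
  f ≫ f† = 𝟙 A

/-- `(L, l)` is a limit cone over the diagram `D`. -/
def IsLimitCone {J : Type u₁} [Category.{v₁} J] (D : J ⥤ C) (L : C)
    (l : ∀ j : J, L ⟶ D.obj j) : Prop :=
  (∀ {j j' : J} (f : j ⟶ j'), l j ≫ D.map f = l j') ∧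
  (∀ (M : C) (m : ∀ j : J, M ⟶ D.obj j),
    (∀ {j j' : J} (f : j ⟶ j'), m j ≫ D.map f = m j') →
    ∃! g : M ⟶ L, ∀ j : J, g ≫ l j = m j)

/-- A class of objects `Ω` is weakly initial when every object admits a morphism
from some member of `Ω`. -/
def WeaklyInitial {J : Type u₁} [Category.{v₁} J] (Ω : Set J) : Prop :=
  ∀ B : J, ∃ A ∈ Ω, Nonempty (A ⟶ B)

/-- `(L, l)` is a dagger limit of `(D, Ω)`: a limit cone whose legs at `Ω` are
partial isometries with pairwise commuting induced projections. -/
def IsDaggerLimit {J : Type u₁} [Category.{v₁} J] (D : J ⥤ C) (Ω : Set J) (L : C)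
    (l : ∀ j : J, L ⟶ D.obj j) : Prop :=
  IsLimitCone D L l ∧
  (∀ j ∈ Ω, IsPartialIsometry (l j)) ∧
  (∀ j ∈ Ω, ∀ j' ∈ Ω,
    (l j ≫ (l j)†) ≫ (l j' ≫ (l j')†) = (l j' ≫ (l j')†) ≫ (l j ≫ (l j)†))

end Defs

/-- For two limit cones `(L, l)`, `(M, m)` over the same diagram in a dagger
category, with `f : L ⟶ M` the unique isomorphism of limit cones, the following are equivalent:
(i) `f` is unitary; (ii) `f` is also a morphism of the daggered colimit cocones, i.e.
`f ∘ l_A† = m_A†` for all `A`; (iii) `m_B ∘ m_A† = l_B ∘ l_A†` for all `A, B`. -/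
theorem unitary_cone_iso_characterization {C : Type u} [Category.{v} C] [DaggerCategory C]
    {J : Type u₁} [Category.{v₁} J] (D : J ⥤ C)
    {L M : C} (l : ∀ j : J, L ⟶ D.obj j) (m : ∀ j : J, M ⟶ D.obj j)
    (hL : IsLimitCone D L l) (hM : IsLimitCone D M m)
    (f : L ⟶ M) (hf : ∀ j : J, f ≫ m j = l j) :
    (IsUnitary f ↔ ∀ j : J, (l j)† ≫ f = (m j)†) ∧
    (IsUnitary f ↔ ∀ j j' : J, (m j)† ≫ m j' = (l j)† ≫ l j') := by
  obtain ⟨hLcone, hLuniv⟩ := hL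
  obtain ⟨hMcone, hMuniv⟩ := hM
  have jm : ∀ {X : C} (a b : X ⟶ M), (∀ j, a ≫ m j = b ≫ m j) → a = b := by
    intro X a b h
    obtain ⟨g, hg, hguniq⟩ := hMuniv X (fun j => a ≫ m j)
      (fun {j j'} k => by rw [Category.assoc, hMcone k])
    rw [hguniq a (fun j => rfl), hguniq b (fun j => (h j).symm)]
  have key12 : IsUnitary f ↔ ∀ j : J, (l j)† ≫ f = (m j)† := by
    constructor
    · rintro ⟨h1, h2⟩ j
      have hl : (l j)† = (m j)† ≫ f† := by
        rw [← DaggerCategory.dag_comp, hf j]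
      rw [hl, Category.assoc, h2, Category.comp_id]
    · intro h
      have hdag : ∀ j, f† ≫ l j = m j := by
        intro j
        have := congrArg DaggerCategory.dag (h j)
        rwa [DaggerCategory.dag_comp, DaggerCategory.dag_dag, DaggerCategory.dag_dag] at this
      constructor
      · obtain ⟨g, hg, hguniq⟩ := hLuniv L l hLcone
        exact (hguniq (f ≫ f†) (fun j => by
          rw [Category.assoc, hdag, hf])).trans
          (hguniq (𝟙 L) (fun j => Category.id_comp _)).symm
      · exact jm _ _ (fun j => by
          rw [Category.assoc, hf, hdag, Category.id_comp])
  have key23 : (∀ j : J, (l j)† ≫ f = (m j)†) ↔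
      ∀ j j' : J, (m j)† ≫ m j' = (l j)† ≫ l j' := by
    constructor
    · intro h j j'
      rw [← h j, Category.assoc, hf j']
    · intro h j
      refine jm _ _ (fun j' => ?_)
      rw [Category.assoc, hf j']
      exact (h j j').symm
  exact ⟨key12, key12.trans key23⟩
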